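/- Under the hypotheses of the Hopf–Lax formula (L convex, superlinear, coercive with L(z) ≥ c|z|² − C, L(0) = 0, and 𝒢 : 𝒫₂(ℝ^d) → ℝ Lipschitz with respect to W₂), the Hopf–Lax function 𝒱(t,μ) = inf_γ [𝒢(exp_μ(γ)) + (T−t) ℒ(γ/(T−t))] satisfies, for each fixed t ∈ (0,T), the Lipschitz bound Lip(𝒱(t,·); W₂) ≤ Lip(𝒢; W₂). -/

import Mathlib

open MeasureTheory Set Filter Metric
open scoped Topology ENNReal NNReal

noncomputable section

abbrev E (d : ℕ) : Type := EuclideanSpace ℝ (Fin d)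

/-- Real inner product. -/
def rinner {d : ℕ} (x y : E d) : ℝ := inner ℝ x y

/-- The second moment of a measure. -/
def secondMoment {d : ℕ} (μ : Measure (E d)) : ℝ := ∫ x, ‖x‖ ^ 2 ∂μ

/-- `γ` is a coupling of `μ` and `ν`. -/
def IsCoupling {d : ℕ} (γ : Measure (E d × E d)) (μ ν : Measure (E d)) : Prop :=
  γ.map Prod.fst = μ ∧ γ.map Prod.snd = ν

/-- The 2-Wasserstein distance. -/
def W2 {d : ℕ} (μ ν : Measure (E d)) : ℝ :=
  sInf {c | ∃ γ : Measure (E d × E d), IsProbabilityMeasure γ ∧ IsCoupling γ μ ν ∧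
    c = Real.sqrt (∫ p, ‖p.1 - p.2‖ ^ 2 ∂γ)}

/-- Probability measures with finite second moment. -/
def P2 (d : ℕ) : Set (Measure (E d)) :=
  {μ | IsProbabilityMeasure μ ∧ Integrable (fun x => ‖x‖ ^ 2) μ}

/-- Plans (velocity plans) with first marginal `μ` and finite second moment. -/
def plans {d : ℕ} (μ : Measure (E d)) : Set (Measure (E d × E d)) :=
  {γ | IsProbabilityMeasure γ ∧ γ.map Prod.fst = μ ∧
    Integrable (fun p => ‖p.1‖ ^ 2 + ‖p.2‖ ^ 2) γ}

/-- The Wasserstein norm of a plan: `‖γ‖_μ = (∫ |z|² dγ(x,z))^{1/2}`. -/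
def plNorm {d : ℕ} (γ : Measure (E d × E d)) : ℝ := Real.sqrt (∫ p, ‖p.2‖ ^ 2 ∂γ)

/-- The exponential map `exp_μ(γ) = (π₁ + π₂)_# γ`. -/
def expMap {d : ℕ} (γ : Measure (E d × E d)) : Measure (E d) :=
  γ.map (fun p => p.1 + p.2)

/-- Rescaling of a plan in the second coordinate: `λ·γ = (π₁, λπ₂)_# γ`. -/
def scal {d : ℕ} (lam : ℝ) (γ : Measure (E d × E d)) : Measure (E d × E d) :=
  γ.map (fun p => (p.1, lam • p.2))

/-- Couplings of two plans along their common first marginal. -/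
def GammaMu {d : ℕ} (γ₁ γ₂ : Measure (E d × E d)) : Set (Measure (E d × E d × E d)) :=
  {θ | IsProbabilityMeasure θ ∧ θ.map (fun q => (q.1, q.2.1)) = γ₁ ∧
    θ.map (fun q => (q.1, q.2.2)) = γ₂}

/-- The relaxed Lagrangian `ℒ(γ) = ∫ L(v) dγ(x,v)`. -/
def Lag {d : ℕ} (L : E d → ℝ) (γ : Measure (E d × E d)) : ℝ := ∫ p, L p.2 ∂γ

/-- The Hopf-Lax function. -/
def HL {d : ℕ} (G : Measure (E d) → ℝ) (L : E d → ℝ) (T t : ℝ) (μ : Measure (E d)) : ℝ :=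
  sInf {r | ∃ γ ∈ plans μ, r = G (expMap γ) + (T - t) * Lag L (scal (T - t)⁻¹ γ)}

/-!
Fix a plan `γ` for `ν` and a coupling `π` of `ν` and `μ`. Disintegrating `γ` along its first
marginal `ν` glues it to `π`, and moving the base points along `π` gives a plan `γ'` for `μ`
with the same velocities as `γ`. Hence `γ'` has the same Lagrangian cost, while
`exp_μ(γ')` and `exp_ν(γ)` are coupled at the cost of `π`, so the terminal cost grows by at
most `K` times that cost; taking infima gives the bound. Coercivity of `L`, combined with the
Lipschitz bound on `G`, keeps the infimum defining the Hopf–Lax function finite.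
-/

open ProbabilityTheory

lemma map_compProd_comap_fst {α β Ω : Type*} [MeasurableSpace α] [MeasurableSpace β]
    [MeasurableSpace Ω] (π : Measure (α × β)) [SFinite π] (κ : Kernel α Ω) [IsSFiniteKernel κ] :
    (π ⊗ₘ κ.comap Prod.fst measurable_fst).map (fun q => (q.1.1, q.2)) = π.fst ⊗ₘ κ := by
  have hm : Measurable (fun q : (α × β) × Ω => (q.1.1, q.2)) := by fun_prop
  ext s hs
  rw [Measure.map_apply hm hs, Measure.compProd_apply (hm hs), Measure.compProd_apply hs,
    Measure.fst, lintegral_map (Kernel.measurable_kernel_prodMk_left hs) measurable_fst]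
  rfl

lemma exists_gluing {α β Ω : Type*} [MeasurableSpace α] [MeasurableSpace β]
    [MeasurableSpace Ω] [StandardBorelSpace Ω] [Nonempty Ω]
    (π : Measure (α × β)) [IsProbabilityMeasure π] (γ : Measure (α × Ω)) [IsFiniteMeasure γ]
    (h : π.fst = γ.fst) :
    ∃ θ : Measure ((α × β) × Ω), IsProbabilityMeasure θ ∧ θ.map Prod.fst = π ∧
      θ.map (fun q => (q.1.1, q.2)) = γ :=
  ⟨π ⊗ₘ γ.condKernel.comap Prod.fst measurable_fst, inferInstance, Measure.fst_compProd _ _,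
    by rw [map_compProd_comap_fst, h, γ.disintegrate γ.condKernel]⟩

section Wasserstein

variable {d : ℕ}

lemma W2_le_of_isCoupling {μ ν : Measure (E d)} (γ : Measure (E d × E d))
    [IsProbabilityMeasure γ] (h : IsCoupling γ μ ν) :
    W2 μ ν ≤ √(∫ p, ‖p.1 - p.2‖ ^ 2 ∂γ) :=
  csInf_le ⟨0, by rintro _ ⟨_, _, _, rfl⟩; positivity⟩ ⟨γ, inferInstance, h, rfl⟩

lemma W2_map_le {Ω : Type*} [MeasurableSpace Ω] (θ : Measure Ω) [IsProbabilityMeasure θ]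
    {f g : Ω → E d} (hf : Measurable f) (hg : Measurable g) :
    W2 (θ.map f) (θ.map g) ≤ √(∫ q, ‖f q - g q‖ ^ 2 ∂θ) := by
  have hfg : Measurable fun q => (f q, g q) := hf.prodMk hg
  have := Measure.isProbabilityMeasure_map (μ := θ) hfg.aemeasurable
  refine (W2_le_of_isCoupling (θ.map fun q => (f q, g q)) ⟨?_, ?_⟩).trans_eq ?_
  · rw [Measure.map_map measurable_fst hfg]; rfl
  · rw [Measure.map_map measurable_snd hfg]; rfl
  · rw [integral_map hfg.aemeasurable (by fun_prop)]

lemma IsCoupling.map_swap {μ ν : Measure (E d)} {γ : Measure (E d × E d)}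
    (h : IsCoupling γ μ ν) : IsCoupling (γ.map Prod.swap) ν μ :=
  ⟨by rw [Measure.map_map measurable_fst measurable_swap]; exact h.2,
    by rw [Measure.map_map measurable_snd measurable_swap]; exact h.1⟩

lemma W2_comm (μ ν : Measure (E d)) : W2 μ ν = W2 ν μ := by
  have hswap (γ : Measure (E d × E d)) :
      ∫ p, ‖p.1 - p.2‖ ^ 2 ∂(γ.map Prod.swap) = ∫ p, ‖p.1 - p.2‖ ^ 2 ∂γ := by
    rw [integral_map measurable_swap.aemeasurable (by fun_prop)]
    simp_rw [Prod.fst_swap, Prod.snd_swap, norm_sub_rev]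
  unfold W2
  congr 1
  ext c
  constructor <;> rintro ⟨γ, hγ, hc, rfl⟩ <;>
    exact ⟨γ.map Prod.swap, Measure.isProbabilityMeasure_map measurable_swap.aemeasurable,
      hc.map_swap, by rw [hswap]⟩

lemma le_mul_W2 {μ ν : Measure (E d)} [IsProbabilityMeasure μ] [IsProbabilityMeasure ν]
    {K a : ℝ} (hK : 0 ≤ K)
    (h : ∀ π, IsProbabilityMeasure π → IsCoupling π μ ν → a ≤ K * √(∫ p, ‖p.1 - p.2‖ ^ 2 ∂π)) :
    a ≤ K * W2 μ ν := by
  rw [W2, ← smul_eq_mul, ← Real.sInf_smul_of_nonneg hK]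
  refine le_csInf ⟨_, Set.smul_mem_smul_set
    ⟨μ.prod ν, inferInstance, ⟨Measure.fst_prod, Measure.snd_prod⟩, rfl⟩⟩ ?_
  rintro _ ⟨_, ⟨π, hπ, hc, rfl⟩, rfl⟩
  exact h π hπ hc

end Wasserstein

section Plans

variable {d : ℕ}

lemma integrable_sq_norm_snd_of_mem_plans {μ : Measure (E d)} {γ : Measure (E d × E d)}
    (hγ : γ ∈ plans μ) : Integrable (fun p : E d × E d => ‖p.2‖ ^ 2) γ :=
  hγ.2.2.mono' (by fun_prop) <| ae_of_all _ fun p => by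
    rw [norm_pow, norm_norm]
    exact le_add_of_nonneg_left (by positivity)

lemma mem_plans_of_map_snd {μ : Measure (E d)} {γ : Measure (E d × E d)}
    [IsProbabilityMeasure γ] (hμ : μ ∈ P2 d) (h1 : γ.map Prod.fst = μ)
    (h2 : Integrable (fun v : E d => ‖v‖ ^ 2) (γ.map Prod.snd)) : γ ∈ plans μ := by
  rw [← h1] at hμ
  exact ⟨inferInstance, h1,
    ((integrable_map_measure (by fun_prop) measurable_fst.aemeasurable).1 hμ.2).add
      ((integrable_map_measure (by fun_prop) measurable_snd.aemeasurable).1 h2)⟩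

lemma nonempty_plans {μ : Measure (E d)} (hμ : μ ∈ P2 d) : (plans μ).Nonempty := by
  have := hμ.1
  have hm : Measurable fun x : E d => (x, (0 : E d)) := by fun_prop
  have := Measure.isProbabilityMeasure_map (μ := μ) hm.aemeasurable
  refine ⟨μ.map fun x => (x, 0), mem_plans_of_map_snd hμ ?_ ?_⟩
  · rw [Measure.map_map measurable_fst hm]
    exact Measure.map_id
  · rw [Measure.map_map measurable_snd hm]
    exact (integrable_map_measure (by fun_prop) (by fun_prop)).2 (by simp [Function.comp_def])

lemma expMap_mem_P2 {μ : Measure (E d)} {γ : Measure (E d × E d)} (hγ : γ ∈ plans μ) :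
    expMap γ ∈ P2 d := by
  have := hγ.1
  refine ⟨Measure.isProbabilityMeasure_map (by fun_prop), ?_⟩
  rw [expMap, integrable_map_measure (by fun_prop) (by fun_prop)]
  refine (hγ.2.2.const_mul 2).mono' (by fun_prop) (ae_of_all _ fun p => ?_)
  rw [Function.comp_apply, norm_pow, norm_norm]
  nlinarith [pow_le_pow_left₀ (norm_nonneg _) (norm_add_le p.1 p.2) 2, sq_nonneg (‖p.1‖ - ‖p.2‖)]

lemma W2_expMap_le_plNorm (γ : Measure (E d × E d)) [IsProbabilityMeasure γ] :
    W2 (γ.map Prod.fst) (expMap γ) ≤ plNorm γ := by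
  refine (W2_map_le γ measurable_fst (by fun_prop)).trans_eq ?_
  simp_rw [plNorm, sub_add_cancel_left, norm_neg]

lemma plNorm_scal (lam : ℝ) (γ : Measure (E d × E d)) :
    plNorm (scal lam γ) = |lam| * plNorm γ := by
  rw [plNorm, plNorm, scal, integral_map (by fun_prop) (by fun_prop)]
  simp_rw [norm_smul, mul_pow, Real.norm_eq_abs, sq_abs, integral_const_mul]
  rw [Real.sqrt_mul (sq_nonneg _), Real.sqrt_sq_eq_abs]

instance isProbabilityMeasure_scal (lam : ℝ) (γ : Measure (E d × E d))
    [IsProbabilityMeasure γ] : IsProbabilityMeasure (scal lam γ) :=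
  Measure.isProbabilityMeasure_map (by fun_prop)

lemma integrable_sq_norm_snd_scal (lam : ℝ) {γ : Measure (E d × E d)}
    (h : Integrable (fun p : E d × E d => ‖p.2‖ ^ 2) γ) :
    Integrable (fun p : E d × E d => ‖p.2‖ ^ 2) (scal lam γ) := by
  rw [scal, integrable_map_measure (by fun_prop) (by fun_prop)]
  refine (h.const_mul (lam ^ 2)).congr (ae_of_all _ fun p => ?_)
  simp [norm_smul, mul_pow]

end Plans

section Lagrangian

variable {d : ℕ} {L : E d → ℝ}

lemma Lag_eq_integral_map_snd (hL : Measurable L) (ρ : Measure (E d × E d)) :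
    Lag L ρ = ∫ v, L v ∂(ρ.map Prod.snd) :=
  (integral_map measurable_snd.aemeasurable hL.aestronglyMeasurable).symm

lemma Lag_scal_congr (hL : Measurable L) (lam : ℝ) {ρ₁ ρ₂ : Measure (E d × E d)}
    (h : ρ₁.map Prod.snd = ρ₂.map Prod.snd) : Lag L (scal lam ρ₁) = Lag L (scal lam ρ₂) := by
  have hsnd (ρ : Measure (E d × E d)) :
      (scal lam ρ).map Prod.snd = (ρ.map Prod.snd).map (lam • ·) := by
    rw [scal, Measure.map_map measurable_snd (by fun_prop),
      Measure.map_map (by fun_prop) measurable_snd]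
    rfl
  rw [Lag_eq_integral_map_snd hL, Lag_eq_integral_map_snd hL, hsnd, hsnd, h]

lemma le_Lag_of_coercive {c C C' : ℝ} (hL : Measurable L) (hlow : ∀ z, c * ‖z‖ ^ 2 - C ≤ L z)
    (hup : ∀ z, L z ≤ C' * (1 + ‖z‖ ^ 2)) {ρ : Measure (E d × E d)} [IsProbabilityMeasure ρ]
    (hρ : Integrable (fun p : E d × E d => ‖p.2‖ ^ 2) ρ) :
    c * plNorm ρ ^ 2 - C ≤ Lag L ρ := by
  have hlowInt : Integrable (fun p : E d × E d => c * ‖p.2‖ ^ 2 - C) ρ :=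
    (hρ.const_mul c).sub (integrable_const C)
  have hLInt : Integrable (fun p : E d × E d => L p.2) ρ :=
    integrable_of_le_of_le (hL.comp measurable_snd).aestronglyMeasurable
      (ae_of_all _ fun p => hlow p.2) (ae_of_all _ fun p => hup p.2) hlowInt
      (((integrable_const 1).add hρ).const_mul C')
  calc c * plNorm ρ ^ 2 - C = ∫ p, (c * ‖p.2‖ ^ 2 - C) ∂ρ := by
        rw [plNorm, Real.sq_sqrt (integral_nonneg fun _ => by positivity),
          integral_sub (hρ.const_mul c) (integrable_const C), integral_const_mul,
          integral_const, probReal_univ, one_smul]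
    _ ≤ Lag L ρ := integral_mono hlowInt hLInt fun p => hlow p.2

end Lagrangian

section HopfLax

variable {d : ℕ} {G : Measure (E d) → ℝ} {L : E d → ℝ} {K : ℝ}

def HLCost (G : Measure (E d) → ℝ) (L : E d → ℝ) (s : ℝ) (γ : Measure (E d × E d)) : ℝ :=
  G (expMap γ) + s * Lag L (scal s⁻¹ γ)

lemma HL_eq_sInf_image (T t : ℝ) (μ : Measure (E d)) :
    HL G L T t μ = sInf (HLCost G L (T - t) '' plans μ) := by
  unfold HL HLCost
  congr 1
  ext r
  simp only [Set.mem_ofPred_eq, Set.mem_image, eq_comm]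

lemma HL_le_HLCost {T t : ℝ} {μ : Measure (E d)} {γ : Measure (E d × E d)}
    (hbdd : BddBelow (HLCost G L (T - t) '' plans μ)) (hγ : γ ∈ plans μ) :
    HL G L T t μ ≤ HLCost G L (T - t) γ := by
  rw [HL_eq_sInf_image]
  exact csInf_le hbdd (mem_image_of_mem _ hγ)

lemma le_HL {T t a : ℝ} {μ : Measure (E d)} (hμ : μ ∈ P2 d)
    (h : ∀ γ ∈ plans μ, a ≤ HLCost G L (T - t) γ) : a ≤ HL G L T t μ := by
  rw [HL_eq_sInf_image]
  exact le_csInf ((nonempty_plans hμ).image _) (forall_mem_image.2 h)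

lemma bddBelow_HLCost {c C C' s : ℝ} (hL : Measurable L) (hc : 0 < c)
    (hlow : ∀ z, c * ‖z‖ ^ 2 - C ≤ L z) (hup : ∀ z, L z ≤ C' * (1 + ‖z‖ ^ 2)) (hK : 0 ≤ K)
    (hG : ∀ μ ∈ P2 d, ∀ ν ∈ P2 d, |G μ - G ν| ≤ K * W2 μ ν) (hs : 0 < s)
    {μ : Measure (E d)} (hμ : μ ∈ P2 d) : BddBelow (HLCost G L s '' plans μ) := by
  refine ⟨G μ - C * s - K ^ 2 * s / (4 * c), ?_⟩
  rintro _ ⟨γ, hγ, rfl⟩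
  have := hγ.1
  set u := plNorm γ
  have hGexp : G μ - K * u ≤ G (expMap γ) := by
    have hW : W2 μ (expMap γ) ≤ u := hγ.2.1 ▸ W2_expMap_le_plNorm γ
    linarith [(le_abs_self _).trans (hG μ hμ _ (expMap_mem_P2 hγ)),
      mul_le_mul_of_nonneg_left hW hK]
  have hLag : c * (s⁻¹ * u) ^ 2 - C ≤ Lag L (scal s⁻¹ γ) := by
    have := le_Lag_of_coercive hL hlow hup (integrable_sq_norm_snd_scal s⁻¹
      (integrable_sq_norm_snd_of_mem_plans hγ))
    rwa [plNorm_scal, abs_of_pos (inv_pos.2 hs)] at this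
  -- completing the square in `u`
  have hsq : s * (c * (s⁻¹ * u) ^ 2 - C) - K * u + K ^ 2 * s / (4 * c)
      = (2 * c * u - K * s) ^ 2 / (4 * c * s) - C * s := by
    field_simp
    ring
  have : 0 ≤ (2 * c * u - K * s) ^ 2 / (4 * c * s) := by positivity
  unfold HLCost
  linarith [mul_le_mul_of_nonneg_left hLag hs.le]

lemma exists_mem_plans_map_snd_eq {μ ν : Measure (E d)} (hμ : μ ∈ P2 d)
    {γ : Measure (E d × E d)} (hγ : γ ∈ plans ν) {π : Measure (E d × E d)}
    [IsProbabilityMeasure π] (hπ : IsCoupling π ν μ) :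
    ∃ γ' ∈ plans μ, γ'.map Prod.snd = γ.map Prod.snd ∧
      W2 (expMap γ') (expMap γ) ≤ √(∫ p, ‖p.1 - p.2‖ ^ 2 ∂π) := by
  have := hγ.1
  obtain ⟨θ, hθ, hθπ, hθγ⟩ := exists_gluing π γ (hπ.1.trans hγ.2.1.symm)
  have hm₁ : Measurable fun q : (E d × E d) × E d => (q.1.1, q.2) := by fun_prop
  have hm₂ : Measurable fun q : (E d × E d) × E d => (q.1.2, q.2) := by fun_prop
  have := Measure.isProbabilityMeasure_map (μ := θ) hm₂.aemeasurable
  have hsnd : (θ.map fun q => (q.1.2, q.2)).map Prod.snd = γ.map Prod.snd := by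
    rw [← hθγ, Measure.map_map measurable_snd hm₁, Measure.map_map measurable_snd hm₂]
    rfl
  refine ⟨θ.map fun q => (q.1.2, q.2), mem_plans_of_map_snd hμ ?_ ?_, hsnd, ?_⟩
  · rw [Measure.map_map measurable_fst hm₂, ← hπ.2, ← hθπ,
      Measure.map_map measurable_snd measurable_fst]
    rfl
  · rw [hsnd]
    exact (integrable_map_measure (by fun_prop) measurable_snd.aemeasurable).2
      (integrable_sq_norm_snd_of_mem_plans hγ)
  · rw [expMap, expMap, ← hθγ, Measure.map_map (by fun_prop) hm₂,
      Measure.map_map (by fun_prop) hm₁]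
    refine (W2_map_le θ (by fun_prop) (by fun_prop)).trans_eq ?_
    rw [← hθπ, integral_map measurable_fst.aemeasurable (by fun_prop)]
    simp_rw [Function.comp_apply, add_sub_add_right_eq_sub, norm_sub_rev]

lemma HL_le_HL_add_of_isCoupling {T t : ℝ} (hL : Measurable L) (hK : 0 ≤ K)
    (hG : ∀ μ ∈ P2 d, ∀ ν ∈ P2 d, |G μ - G ν| ≤ K * W2 μ ν) {μ ν : Measure (E d)}
    (hbdd : BddBelow (HLCost G L (T - t) '' plans μ)) (hμ : μ ∈ P2 d) (hν : ν ∈ P2 d)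
    {π : Measure (E d × E d)} [IsProbabilityMeasure π] (hπ : IsCoupling π ν μ) :
    HL G L T t μ ≤ HL G L T t ν + K * √(∫ p, ‖p.1 - p.2‖ ^ 2 ∂π) := by
  suffices HL G L T t μ - K * √(∫ p, ‖p.1 - p.2‖ ^ 2 ∂π) ≤ HL G L T t ν by linarith
  refine le_HL hν fun γ hγ => ?_
  obtain ⟨γ', hγ', hsnd, hW⟩ := exists_mem_plans_map_snd_eq hμ hγ hπ
  have hGexp := (le_abs_self _).trans (hG _ (expMap_mem_P2 hγ') _ (expMap_mem_P2 hγ))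
  have hHL := HL_le_HLCost hbdd hγ'
  unfold HLCost at hHL ⊢
  rw [Lag_scal_congr hL _ hsnd] at hHL
  linarith [mul_le_mul_of_nonneg_left hW hK]

lemma HL_sub_HL_le {c C C' T t : ℝ} (hL : Measurable L) (hc : 0 < c)
    (hlow : ∀ z, c * ‖z‖ ^ 2 - C ≤ L z) (hup : ∀ z, L z ≤ C' * (1 + ‖z‖ ^ 2)) (hK : 0 ≤ K)
    (hG : ∀ μ ∈ P2 d, ∀ ν ∈ P2 d, |G μ - G ν| ≤ K * W2 μ ν) (htT : t < T)
    {μ ν : Measure (E d)} (hμ : μ ∈ P2 d) (hν : ν ∈ P2 d) :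
    HL G L T t μ - HL G L T t ν ≤ K * W2 ν μ := by
  have := hμ.1
  have := hν.1
  refine le_mul_W2 hK fun π _ hπ => ?_
  have := HL_le_HL_add_of_isCoupling hL hK hG
    (bddBelow_HLCost hL hc hlow hup hK hG (sub_pos.2 htT) hμ) hμ hν hπ
  linarith

end HopfLax

theorem hopf_lax_lipschitz_general {d : ℕ} (L : E d → ℝ) (G : Measure (E d) → ℝ) (T K : ℝ)
    (hLconv : ConvexOn ℝ Set.univ L)
    (hquad : ∃ C > 0, ∀ z : E d, L z ≤ C * (1 + ‖z‖ ^ 2))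
    (hcoer : ∃ c > 0, ∃ C > 0, ∀ z : E d, c * ‖z‖ ^ 2 - C ≤ L z)
    (hK : 0 ≤ K)
    (hG : ∀ μ ∈ P2 d, ∀ ν ∈ P2 d, |G μ - G ν| ≤ K * W2 μ ν)
    (t : ℝ) (htT : t < T)
    (μ ν : Measure (E d)) (hμ : μ ∈ P2 d) (hν : ν ∈ P2 d) :
    |HL G L T t μ - HL G L T t ν| ≤ K * W2 μ ν := by
  have hL : Measurable L := (continuousOn_univ.mp (hLconv.continuousOn isOpen_univ)).measurable
  obtain ⟨C', -, hup⟩ := hquad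
  obtain ⟨c, hc, C, -, hlow⟩ := hcoer
  rw [abs_sub_le_iff]
  refine ⟨?_, HL_sub_HL_le hL hc hlow hup hK hG htT hν hμ⟩
  rw [W2_comm]
  exact HL_sub_HL_le hL hc hlow hup hK hG htT hμ hν

theorem hopf_lax_lipschitz {d : ℕ} (L : E d → ℝ) (G : Measure (E d) → ℝ) (T K : ℝ)
    (hLconv : ConvexOn ℝ Set.univ L) (hL0 : L 0 = 0)
    (hsuper : ∀ M : ℝ, ∃ R : ℝ, ∀ z : E d, R ≤ ‖z‖ → M * ‖z‖ ≤ L z)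
    (hquad : ∃ C > 0, ∀ z : E d, L z ≤ C * (1 + ‖z‖ ^ 2))
    (hcoer : ∃ c > 0, ∃ C > 0, ∀ z : E d, c * ‖z‖ ^ 2 - C ≤ L z)
    (hK : 0 ≤ K)
    (hG : ∀ μ ∈ P2 d, ∀ ν ∈ P2 d, |G μ - G ν| ≤ K * W2 μ ν)
    (t : ℝ) (ht0 : 0 < t) (htT : t < T)
    (μ ν : Measure (E d)) (hμ : μ ∈ P2 d) (hν : ν ∈ P2 d) :
    |HL G L T t μ - HL G L T t ν| ≤ K * W2 μ ν :=
  hopf_lax_lipschitz_general L G T K hLconv hquad hcoer hK hG t htT μ ν hμ hν
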